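/- (Proposition 3.5) Suppose a discrete form Ω : ℤ⁴ → Cl satisfies the discrete Joyce equation iDΩ = mΩe₀. Then Ω = ΩP_{+12} + ΩP_{−12}, where ΩP_{+12} satisfies the discrete Hestenes equation −(D(ΩP_{+12}))e₁e₂ = m(ΩP_{+12})e₀, while ΩP_{−12} satisfies the same equation with reversed mass sign: −(D(ΩP_{−12}))e₁e₂ = −m(ΩP_{−12})e₀. -/

import Mathlib

noncomputable section

/-- The Minkowski quadratic form `Q v = v₀² − v₁² − v₂² − v₃²` on `ℂ⁴`. -/
def Q : QuadraticForm ℂ (Fin 4 → ℂ) :=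
  QuadraticMap.weightedSumSquares ℂ ![(1 : ℂ), -1, -1, -1]

/-- The Clifford algebra of spacetime over `ℂ`. -/
abbrev Cl : Type := CliffordAlgebra Q

/-- The generators `e_μ`, images of the standard basis vectors. -/
def e (μ : Fin 4) : Cl := CliffordAlgebra.ι Q (Pi.single μ 1)

/-- The volume element `e = e₀e₁e₂e₃`. -/
def eV : Cl := e 0 * e 1 * e 2 * e 3

/-- The difference operator `(Δ_μ Ω)(k) = Ω(k + 1_μ) − Ω(k)`. -/
def Δ (μ : Fin 4) (Ω : (Fin 4 → ℤ) → Cl) : (Fin 4 → ℤ) → Cl :=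
  fun k => Ω (k + Pi.single μ 1) - Ω k

/-- The discrete Dirac operator `DΩ = Σ_μ e_μ · (Δ_μ Ω)`. -/
def Dirac (Ω : (Fin 4 → ℤ) → Cl) : (Fin 4 → ℤ) → Cl :=
  fun k => ∑ μ : Fin 4, e μ * Δ μ Ω k

def P12p : Cl := (2⁻¹ : ℂ) • (1 + Complex.I • (e 1 * e 2))
def P12m : Cl := (2⁻¹ : ℂ) • (1 - Complex.I • (e 1 * e 2))

/-!
Right multiplication by a constant commutes with the (left-acting) Dirac operator, so it maps
solutions of the Joyce equation `iDΩ = mΩe₀` to solutions as long as the constant commutes with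
`e₀`. The bivector `E = e₁e₂` anticommutes with `e₀` factor by factor, hence commutes with it, and
squares to `-1`; so `P_{±12} = ½(1 ± iE)` commute with `e₀`, add up to `1` and satisfy
`P_{±12} E = ∓ i P_{±12}`. For `Ψ = ΩP_{±12}` this turns `-(DΨ)E` into `±iDΨ = ±mΨe₀`.
-/

open Complex (I)

namespace QuadraticMap

variable {ι R : Type*} [Fintype ι] [DecidableEq ι] [CommSemiring R]

theorem weightedSumSquares_single_one (w : ι → R) (i : ι) :
    weightedSumSquares R w (Pi.single i 1) = w i := by
  simp [weightedSumSquares_apply, Pi.single_apply]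

theorem isOrtho_weightedSumSquares_single (w : ι → R) {i j : ι} (hij : i ≠ j) (a b : R) :
    (weightedSumSquares R w).IsOrtho (Pi.single i a) (Pi.single j b) := by
  rw [isOrtho_def, weightedSumSquares_apply, weightedSumSquares_apply, weightedSumSquares_apply,
    ← Finset.sum_add_distrib]
  refine Finset.sum_congr rfl fun l _ => ?_
  rcases eq_or_ne l i with rfl | hi
  · simp [hij]
  rcases eq_or_ne l j with rfl | hj
  · simp [hi]
  · simp [hi, hj]

end QuadraticMap

theorem commute_mul_of_anticommute {R : Type*} [Ring R] {a b c : R} (hb : a * b = -(b * a))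
    (hc : a * c = -(c * a)) : Commute a (b * c) := by
  calc a * (b * c) = -(b * (a * c)) := by rw [← mul_assoc, hb, neg_mul, mul_assoc]
    _ = b * c * a := by rw [hc, mul_neg, neg_neg, mul_assoc]

theorem e_mul_self (μ : Fin 4) : e μ * e μ = algebraMap ℂ Cl (![(1 : ℂ), -1, -1, -1] μ) :=
  (CliffordAlgebra.ι_sq_scalar Q _).trans
    (congrArg _ (QuadraticMap.weightedSumSquares_single_one _ μ))

theorem e_mul_e_of_ne {μ ν : Fin 4} (h : μ ≠ ν) : e μ * e ν = -(e ν * e μ) :=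
  CliffordAlgebra.ι_mul_ι_comm_of_isOrtho (QuadraticMap.isOrtho_weightedSumSquares_single _ h _ _)

theorem e12_mul_self : e 1 * e 2 * (e 1 * e 2) = -1 := by
  calc e 1 * e 2 * (e 1 * e 2) = e 1 * (e 2 * e 1) * e 2 := by noncomm_ring
    _ = -((e 1 * e 1) * (e 2 * e 2)) := by rw [e_mul_e_of_ne (by decide)]; noncomm_ring
    _ = -1 := by simp [e_mul_self]

theorem commute_e0_e12 : Commute (e 0) (e 1 * e 2) :=
  commute_mul_of_anticommute (e_mul_e_of_ne (by decide)) (e_mul_e_of_ne (by decide))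

section Projectors

variable {A : Type*} [Ring A] [Algebra ℂ A] {E : A}

theorem half_one_add_I_smul_mul (hE : E * E = -1) :
    (2⁻¹ : ℂ) • (1 + I • E) * E = -I • (2⁻¹ : ℂ) • (1 + I • E) := by
  simp only [smul_mul_assoc, add_mul, one_mul, hE]
  match_scalars <;> simp [Complex.ext_iff]

theorem half_one_sub_I_smul_mul (hE : E * E = -1) :
    (2⁻¹ : ℂ) • (1 - I • E) * E = I • (2⁻¹ : ℂ) • (1 - I • E) := by
  simp only [smul_mul_assoc, sub_mul, one_mul, hE]
  match_scalars <;> simp [Complex.ext_iff]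

theorem half_one_add_I_smul_add_half_one_sub_I_smul (E : A) :
    (2⁻¹ : ℂ) • (1 + I • E) + (2⁻¹ : ℂ) • (1 - I • E) = 1 := by
  module

theorem Commute.half_one_add_I_smul {a : A} (h : Commute a E) (s : ℂ) :
    Commute a ((2⁻¹ : ℂ) • (1 + s • E)) :=
  ((Commute.one_right a).add_right (h.smul_right s)).smul_right _

end Projectors

theorem P12p_mul_e12 : P12p * (e 1 * e 2) = -I • P12p :=
  half_one_add_I_smul_mul e12_mul_self

theorem P12m_mul_e12 : P12m * (e 1 * e 2) = I • P12m :=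
  half_one_sub_I_smul_mul e12_mul_self

theorem P12p_add_P12m : P12p + P12m = 1 :=
  half_one_add_I_smul_add_half_one_sub_I_smul _

theorem commute_e0_P12p : Commute (e 0) P12p :=
  commute_e0_e12.half_one_add_I_smul I

theorem commute_e0_P12m : Commute (e 0) P12m := by
  simpa only [P12m, sub_eq_add_neg, neg_smul] using commute_e0_e12.half_one_add_I_smul (-I)

theorem Dirac_mul_right (Ω : (Fin 4 → ℤ) → Cl) (c : Cl) (k : Fin 4 → ℤ) :
    Dirac (fun k => Ω k * c) k = Dirac Ω k * c := by
  simp only [Dirac, Δ, Finset.sum_mul, sub_mul, mul_assoc]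

theorem Dirac_mul_right_mul_of_mul_eq_smul {c E : Cl} {z : ℂ} (h : c * E = z • c)
    (Ω : (Fin 4 → ℤ) → Cl) (k : Fin 4 → ℤ) :
    Dirac (fun k => Ω k * c) k * E = z • Dirac (fun k => Ω k * c) k := by
  rw [Dirac_mul_right, mul_assoc, h, mul_smul_comm]

def IsJoyceSolution (m : ℝ) (Ω : (Fin 4 → ℤ) → Cl) : Prop :=
  ∀ k, I • Dirac Ω k = (m : ℂ) • (Ω k * e 0)

theorem IsJoyceSolution.mul_right {m : ℝ} {Ω : (Fin 4 → ℤ) → Cl} (hΩ : IsJoyceSolution m Ω)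
    {c : Cl} (hc : Commute (e 0) c) : IsJoyceSolution m fun k => Ω k * c := fun k => by
  rw [Dirac_mul_right, ← smul_mul_assoc, hΩ k, smul_mul_assoc, mul_assoc, hc.eq, mul_assoc]

/-- Proposition 3.5: a solution `Ω` of the discrete Joyce equation `iDΩ = mΩe₀`
decomposes as `Ω = ΩP_{+12} + ΩP_{−12}`, where `ΩP_{+12}` satisfies the discrete
Hestenes equation and `ΩP_{−12}` satisfies it with reversed mass sign. -/
theorem stmt_7 (m : ℝ) (Ω : (Fin 4 → ℤ) → Cl)
    (hΩ : ∀ k, Complex.I • Dirac Ω k = (m : ℂ) • (Ω k * e 0)) :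
    (∀ k, Ω k = Ω k * P12p + Ω k * P12m) ∧
    (∀ k, -(Dirac (fun k => Ω k * P12p) k * (e 1 * e 2)) =
      (m : ℂ) • ((Ω k * P12p) * e 0)) ∧
    (∀ k, -(Dirac (fun k => Ω k * P12m) k * (e 1 * e 2)) =
      -((m : ℂ) • ((Ω k * P12m) * e 0))) := by
  have hJoyce : IsJoyceSolution m Ω := hΩ
  refine ⟨fun k => by rw [← mul_add, P12p_add_P12m, mul_one], fun k => ?_, fun k => ?_⟩
  · rw [Dirac_mul_right_mul_of_mul_eq_smul P12p_mul_e12, neg_smul, neg_neg,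
      hJoyce.mul_right commute_e0_P12p k]
  · rw [Dirac_mul_right_mul_of_mul_eq_smul P12m_mul_e12, hJoyce.mul_right commute_e0_P12m k]
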